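/- Let n ≥ 1, k ≥ 0, l ≥ 0 be integers, m ∈ ℤ, s ∈ ℂ, and let h : ℝⁿ → ℂ be a harmonic polynomial homogeneous of degree k. Then for all θ ∈ ℝ and y ∈ ℝⁿ, (η⁺ F_{m,l,k}[h])(θ,y) = −((m+4l+2k+n)/4) · F_{m+4,l,k}[h](θ,y). -/

import Mathlib

noncomputable section

/-- `n`-dimensional Euclidean space. -/
abbrev E (n : ℕ) := EuclideanSpace ℝ (Fin n)

/-- Partial derivative in the `j`-th coordinate direction. -/
noncomputable def pd {n : ℕ} (j : Fin n) (f : E n → ℂ) (y : E n) : ℂ :=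
  fderiv ℝ f y (EuclideanSpace.single j 1)

/-- The Laplacian `Δ = ∑ⱼ ∂²/∂yⱼ²`. -/
noncomputable def lap {n : ℕ} (f : E n → ℂ) (y : E n) : ℂ :=
  ∑ j : Fin n, pd j (pd j f) y

/-- `h : ℝⁿ → ℂ` is a harmonic polynomial, homogeneous of degree `k`:
it is given by a polynomial in the coordinates, `h (t • y) = t^k * h y`,
and `Δ h = 0`. -/
def IsHarmonicHomog {n : ℕ} (k : ℕ) (h : E n → ℂ) : Prop :=
  (∃ p : MvPolynomial (Fin n) ℂ, ∀ y : E n, h y = MvPolynomial.eval (fun j => ((y j : ℝ) : ℂ)) p) ∧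
  (∀ (t : ℝ) (y : E n), h (t • y) = (t : ℂ) ^ k * h y) ∧
  (∀ y : E n, lap h y = 0)

/-- Confluent hypergeometric function of the first kind
`₁F₁(a,b,z) = ∑ⱼ (a)ⱼ/(b)ⱼ · zʲ/j!`. -/
noncomputable def oneF1 (a b z : ℂ) : ℂ :=
  ∑' j : ℕ, ((ascPochhammer ℂ j).eval a / (ascPochhammer ℂ j).eval b) * z ^ j / (j.factorial : ℂ)

/-- The `K`-finite vector
`F_{m,l,k}[h](θ,y) = e^{-imθ/2} e^{-is‖y‖²} ‖y‖^{2l} h(y) ₁F₁((m+4l+2k+n)/4, 2l+k+n/2, 2is‖y‖²)`. -/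
noncomputable def Fm (n : ℕ) (s : ℂ) (m : ℤ) (l : ℕ) (k : ℤ) (h : E n → ℂ)
    (θ : ℝ) (y : E n) : ℂ :=
  Complex.exp (-Complex.I * (m : ℂ) * (θ : ℂ) / 2) *
    Complex.exp (-Complex.I * s * ((‖y‖ : ℝ) : ℂ) ^ 2) * ((‖y‖ : ℝ) : ℂ) ^ (2 * l) * h y *
    oneF1 (((m : ℂ) + 4 * (l : ℂ) + 2 * (k : ℂ) + (n : ℂ)) / 4)
      (2 * (l : ℂ) + (k : ℂ) + (n : ℂ) / 2)
      (2 * Complex.I * s * ((‖y‖ : ℝ) : ℂ) ^ 2)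

/-!
Along the ray `t ↦ t • y` the homogeneity of `h` makes `F_{m,l,k}[h]` an explicit function of `t`,
and the Euler operator `∑ⱼ yⱼ ∂ⱼ` is its derivative at `t = 1`. That derivative produces the
combination `a ₁F₁(a,b,z) + z ₁F₁'(a,b,z)`, which the contiguous relation
`a ₁F₁(a,b,z) + z ₁F₁'(a,b,z) = a ₁F₁(a+1,b,z)` (termwise `(a)ⱼ (a+j) = a (a+1)ⱼ`) turns into a
multiple of `₁F₁(a+1,b,z)`, i.e. of `F_{m+4,l,k}[h]`; the `θ`-derivative only contributes
`-(m/2) F_{m,l,k}[h]`.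
-/

open Complex
open scoped Nat

section EntireSeries

variable {c : ℕ → ℂ} {K : ℝ}

lemma norm_mul_pow_le_of_norm_le (hc : ∀ j, ‖c j‖ ≤ K ^ j / j !) (z : ℂ) (j : ℕ) :
    ‖c j * z ^ j‖ ≤ (K * ‖z‖) ^ j / j ! := by
  rw [norm_mul, norm_pow, mul_pow, mul_div_right_comm]
  exact mul_le_mul_of_nonneg_right (hc j) (by positivity)

lemma norm_mul_deriv_pow_le_of_norm_le (hc : ∀ j, ‖c j‖ ≤ K ^ j / j !) {R : ℝ} (hR : 1 ≤ R)
    {w : ℂ} (hw : ‖w‖ ≤ R) (j : ℕ) :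
    ‖c j * (j * w ^ (j - 1))‖ ≤ (2 * K * R) ^ j / j ! := by
  have hj : (j : ℝ) ≤ 2 ^ j := by exact_mod_cast (Nat.lt_two_pow_self).le
  have hwR : ‖w‖ ^ (j - 1) ≤ R ^ j :=
    (pow_le_pow_left₀ (norm_nonneg w) hw _).trans (pow_le_pow_right₀ hR (Nat.sub_le j 1))
  calc ‖c j * (j * w ^ (j - 1))‖ = ‖c j‖ * (j * ‖w‖ ^ (j - 1)) := by
        rw [norm_mul, norm_mul, norm_pow, Complex.norm_natCast]
    _ ≤ K ^ j / j ! * (2 ^ j * R ^ j) :=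
        mul_le_mul (hc j) (mul_le_mul hj hwR (by positivity) (by positivity)) (by positivity)
          ((norm_nonneg _).trans (hc j))
    _ = (2 * K * R) ^ j / j ! := by rw [mul_pow, mul_pow]; ring

lemma summable_mul_pow_of_norm_le (hc : ∀ j, ‖c j‖ ≤ K ^ j / j !) (z : ℂ) :
    Summable fun j => c j * z ^ j :=
  .of_norm_bounded (Real.summable_pow_div_factorial _) (norm_mul_pow_le_of_norm_le hc z)

lemma summable_mul_deriv_pow_of_norm_le (hc : ∀ j, ‖c j‖ ≤ K ^ j / j !) (z : ℂ) :
    Summable fun j => c j * (j * z ^ (j - 1)) :=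
  .of_norm_bounded (Real.summable_pow_div_factorial _)
    (norm_mul_deriv_pow_le_of_norm_le hc (le_add_of_nonneg_left (norm_nonneg z))
      (le_add_of_nonneg_right zero_le_one))

lemma hasDerivAt_tsum_mul_pow_of_norm_le (hc : ∀ j, ‖c j‖ ≤ K ^ j / j !) (z : ℂ) :
    HasDerivAt (fun w => ∑' j, c j * w ^ j) (∑' j, c j * (j * z ^ (j - 1))) z := by
  have hR : 1 ≤ ‖z‖ + 1 := le_add_of_nonneg_left (norm_nonneg z)
  refine hasDerivAt_tsum_of_isPreconnected (Real.summable_pow_div_factorial (2 * K * (‖z‖ + 1)))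
    Metric.isOpen_ball (convex_ball 0 _).isPreconnected
    (fun j w _ => (hasDerivAt_pow j w).const_mul (c j))
    (fun j w hw => norm_mul_deriv_pow_le_of_norm_le hc hR (mem_ball_zero_iff.mp hw).le j)
    (Metric.mem_ball_self (by positivity)) (summable_mul_pow_of_norm_le hc 0) ?_
  simp

end EntireSeries

section OneF1

def oneF1Coeff (a b : ℂ) (j : ℕ) : ℂ :=
  (ascPochhammer ℂ j).eval a / (ascPochhammer ℂ j).eval b / j !

lemma oneF1_eq_tsum (a b z : ℂ) : oneF1 a b z = ∑' j, oneF1Coeff a b j * z ^ j :=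
  tsum_congr fun j => by rw [oneF1Coeff]; ring

lemma norm_ascPochhammer_eval_le {a b : ℂ} (hb : 0 < b.re) (j : ℕ) :
    ‖(ascPochhammer ℂ j).eval a‖ ≤ max 1 (‖a‖ / b.re) ^ j * ‖(ascPochhammer ℂ j).eval b‖ := by
  set C := max 1 (‖a‖ / b.re)
  have hC1 : (1 : ℝ) ≤ C := le_max_left _ _
  induction j with
  | zero => simp
  | succ j ih =>
    have hstep : ‖a + j‖ ≤ C * ‖b + j‖ := calc
      ‖a + j‖ ≤ ‖a‖ + j := by simpa using norm_add_le a (j : ℂ)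
      _ ≤ C * (b + j).re := by
        have h1 : ‖a‖ ≤ C * b.re := (div_le_iff₀ hb).mp (le_max_right _ _)
        have h2 : (j : ℝ) ≤ C * j := le_mul_of_one_le_left j.cast_nonneg hC1
        simp only [add_re, natCast_re]; linarith
      _ ≤ C * ‖b + j‖ := by gcongr; exact re_le_norm _
    rw [ascPochhammer_succ_eval, ascPochhammer_succ_eval, norm_mul, norm_mul, pow_succ]
    calc _ ≤ C ^ j * ‖(ascPochhammer ℂ j).eval b‖ * (C * ‖b + j‖) :=
          mul_le_mul ih hstep (norm_nonneg _) (by positivity)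
      _ = _ := by ring

lemma norm_oneF1Coeff_le {a b : ℂ} (hb : 0 < b.re) (j : ℕ) :
    ‖oneF1Coeff a b j‖ ≤ max 1 (‖a‖ / b.re) ^ j / j ! := by
  rw [oneF1Coeff, norm_div, norm_div, Complex.norm_natCast]
  gcongr
  exact div_le_of_le_mul₀ (norm_nonneg _) (by positivity) (norm_ascPochhammer_eval_le hb j)

lemma oneF1Coeff_mul_add (a b : ℂ) (j : ℕ) :
    oneF1Coeff a b j * (a + j) = a * oneF1Coeff (a + 1) b j := by
  have h : (ascPochhammer ℂ j).eval a * (a + j) = a * (ascPochhammer ℂ j).eval (a + 1) := by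
    rw [← ascPochhammer_succ_eval, ascPochhammer_succ_left]; simp
  simp only [oneF1Coeff, div_eq_mul_inv]
  linear_combination ((ascPochhammer ℂ j).eval b)⁻¹ * (j ! : ℂ)⁻¹ * h

variable {a b : ℂ}

lemma hasDerivAt_oneF1 (hb : 0 < b.re) (z : ℂ) :
    HasDerivAt (oneF1 a b) (∑' j, oneF1Coeff a b j * (j * z ^ (j - 1))) z := by
  simpa only [← oneF1_eq_tsum] using
    hasDerivAt_tsum_mul_pow_of_norm_le (norm_oneF1Coeff_le hb) z

lemma differentiable_oneF1 (hb : 0 < b.re) : Differentiable ℂ (oneF1 a b) :=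
  fun z => (hasDerivAt_oneF1 hb z).differentiableAt

lemma oneF1_contiguous (hb : 0 < b.re) (z : ℂ) :
    a * oneF1 a b z + z * deriv (oneF1 a b) z = a * oneF1 (a + 1) b z := by
  have hc := norm_oneF1Coeff_le (a := a) hb
  have hz (j : ℕ) :
      z * (oneF1Coeff a b j * (j * z ^ (j - 1))) = oneF1Coeff a b j * (j * z ^ j) := by
    cases j with
    | zero => simp
    | succ j => simp [pow_succ]; ring
  rw [(hasDerivAt_oneF1 hb z).deriv, oneF1_eq_tsum, oneF1_eq_tsum, ← tsum_mul_left,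
    ← tsum_mul_left, ← tsum_mul_left, ← Summable.tsum_add
      ((summable_mul_pow_of_norm_le hc z).mul_left a)
      ((summable_mul_deriv_pow_of_norm_le hc z).mul_left z)]
  refine tsum_congr fun j => ?_
  rw [hz]
  linear_combination z ^ j * oneF1Coeff_mul_add a b j

lemma hasDerivAt_radial_oneF1 (hb : 0 < b.re) (c : ℂ) (p : ℕ) :
    HasDerivAt
      (fun t : ℝ => cexp (-(c * (t : ℂ) ^ 2)) * (t : ℂ) ^ p * oneF1 a b (2 * c * (t : ℂ) ^ 2))
      (cexp (-c) * ((p - 2 * c - 2 * a) * oneF1 a b (2 * c) + 2 * a * oneF1 (a + 1) b (2 * c)))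
      1 := by
  have hsq (d : ℂ) : HasDerivAt (fun w : ℂ => d * w ^ 2) (d * 2) ((1 : ℝ) : ℂ) := by
    simpa using (hasDerivAt_pow 2 ((1 : ℝ) : ℂ)).const_mul d
  have hF : HasDerivAt (fun w : ℂ => oneF1 a b (2 * c * w ^ 2))
      (deriv (oneF1 a b) (2 * c * ((1 : ℝ) : ℂ) ^ 2) * (2 * c * 2)) ((1 : ℝ) : ℂ) :=
    ((differentiable_oneF1 hb) _).hasDerivAt.comp _ (hsq (2 * c))
  have hg := ((((hsq c).fun_neg).cexp.fun_mul (hasDerivAt_pow p _)).fun_mul hF).comp_ofReal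
  convert hg using 1
  have hcontig := oneF1_contiguous (a := a) hb (2 * c)
  simp only [ofReal_one, one_pow, mul_one]
  linear_combination (-2 * cexp (-c)) * hcontig

end OneF1

lemma differentiable_eval_ofReal_coord {n : ℕ} (p : MvPolynomial (Fin n) ℂ) :
    Differentiable ℝ fun y : E n => MvPolynomial.eval (fun j => ((y j : ℝ) : ℂ)) p := by
  induction p using MvPolynomial.induction_on with
  | C a => simp
  | add p q hp hq => simp only [map_add]; exact hp.add hq
  | mul_X p i hp =>
    simp only [map_mul, MvPolynomial.eval_X]
    exact hp.mul (ofRealCLM.differentiable.comp (by fun_prop))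

lemma IsHarmonicHomog.differentiable {n k : ℕ} {h : E n → ℂ} (hh : IsHarmonicHomog k h) :
    Differentiable ℝ h := by
  obtain ⟨⟨p, hp⟩, -⟩ := hh
  rw [funext hp]
  exact differentiable_eval_ofReal_coord p

lemma sum_coord_mul_pd_eq_deriv_smul {n : ℕ} {f : E n → ℂ} {y : E n}
    (hf : DifferentiableAt ℝ f y) :
    ∑ j, ((y j : ℝ) : ℂ) * pd j f y = deriv (fun t : ℝ => f (t • y)) 1 := by
  have hray : HasDerivAt (fun t : ℝ => f (t • y)) (fderiv ℝ f y y) 1 := by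
    have hline : HasDerivAt (fun t : ℝ => t • y) y 1 := by
      simpa using (hasDerivAt_id (1 : ℝ)).smul_const y
    exact hf.hasFDerivAt.comp_hasDerivAt_of_eq 1 hline (one_smul ℝ y).symm
  rw [hray.deriv,
    ← congrArg (fderiv ℝ f y) ((EuclideanSpace.basisFun (Fin n) ℝ).sum_repr y)]
  simp [pd, map_sum, Complex.real_smul]

lemma lowerParam_re_pos {n l k : ℕ} (hb : 0 < 2 * l + k + n) :
    0 < (2 * (l : ℂ) + k + n / 2).re := by
  have : (0 : ℝ) < 2 * l + k + n := by exact_mod_cast hb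
  norm_num
  linarith [(n.cast_nonneg : (0 : ℝ) ≤ n)]

lemma differentiable_Fm {n : ℕ} (s : ℂ) (m : ℤ) {l k : ℕ} (hb : 0 < 2 * l + k + n)
    {h : E n → ℂ} (hh : Differentiable ℝ h) (θ : ℝ) : Differentiable ℝ (Fm n s m l k h θ) := by
  have hq : Differentiable ℝ fun y : E n => ((‖y‖ ^ 2 : ℝ) : ℂ) :=
    ofRealCLM.differentiable.comp (contDiff_norm_sq ℝ (n := 1)).differentiable_one
  have hF := (differentiable_oneF1 (a := ((m : ℂ) + 4 * l + 2 * k + n) / 4)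
    (lowerParam_re_pos hb)).restrictScalars ℝ
  have hfun : Fm n s m l k h θ = fun y => cexp (-I * m * θ / 2) *
      cexp (-I * s * ((‖y‖ ^ 2 : ℝ) : ℂ)) * ((‖y‖ ^ 2 : ℝ) : ℂ) ^ l * h y *
      oneF1 (((m : ℂ) + 4 * l + 2 * k + n) / 4) (2 * (l : ℂ) + k + n / 2)
        (2 * I * s * ((‖y‖ ^ 2 : ℝ) : ℂ)) := by
    funext y
    simp only [Fm, ofReal_pow, pow_mul, Int.cast_natCast]
  rw [hfun]
  exact ((((differentiable_const _).mul ((hq.const_mul _).cexp)).mul (hq.pow l)).mul hh).mul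
    (hF.comp (hq.const_mul _))

section Fm

variable {n : ℕ} (s : ℂ) (m : ℤ) (l : ℕ) (h : E n → ℂ) (θ : ℝ) (y : E n)

lemma Fm_eq_exp_mul_Fm_zero (k : ℤ) :
    Fm n s m l k h θ y = cexp (-I * m * θ / 2) * Fm n s m l k h 0 y := by
  simp only [Fm, ofReal_zero, mul_zero, zero_div, Complex.exp_zero, one_mul]
  ring

lemma hasDerivAt_Fm_angle (k : ℤ) :
    HasDerivAt (fun θ' => Fm n s m l k h θ' y) (-I * m / 2 * Fm n s m l k h θ y) θ := by
  have he : HasDerivAt (fun θ' : ℝ => cexp (-I * m * θ' / 2))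
      (cexp (-I * m * θ / 2) * (-I * m / 2)) θ := by
    simpa using (((hasDerivAt_id (θ : ℂ)).const_mul (-I * m)).div_const 2).cexp.comp_ofReal
  rw [funext fun θ' => Fm_eq_exp_mul_Fm_zero s m l h θ' y k, Fm_eq_exp_mul_Fm_zero s m l h θ y k]
  exact (he.mul_const _).congr_deriv (by ring)

lemma Fm_add_four (k : ℤ) :
    Fm n s (m + 4) l k h θ y = cexp (-2 * I * θ) * (cexp (-I * m * θ / 2) *
      cexp (-I * s * ((‖y‖ : ℝ) : ℂ) ^ 2) * ((‖y‖ : ℝ) : ℂ) ^ (2 * l) * h y *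
      oneF1 (((m : ℂ) + 4 * l + 2 * k + n) / 4 + 1) (2 * (l : ℂ) + k + n / 2)
        (2 * I * s * ((‖y‖ : ℝ) : ℂ) ^ 2)) := by
  have hexp :
      cexp (-I * ((m + 4 : ℤ) : ℂ) * θ / 2) = cexp (-2 * I * θ) * cexp (-I * m * θ / 2) := by
    rw [← Complex.exp_add]; push_cast; ring_nf
  have hparam :
      (((m + 4 : ℤ) : ℂ) + 4 * l + 2 * k + n) / 4 = ((m : ℂ) + 4 * l + 2 * k + n) / 4 + 1 := by
    push_cast; ring
  rw [Fm, hexp, hparam]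
  ring

variable {s m l h θ y}

lemma Fm_smul {k : ℕ} (hhom : ∀ (t : ℝ) (y : E n), h (t • y) = (t : ℂ) ^ k * h y) (t : ℝ) :
    Fm n s m l k h θ (t • y) = cexp (-I * m * θ / 2) * ((‖y‖ : ℝ) : ℂ) ^ (2 * l) * h y *
      (cexp (-(I * s * ((‖y‖ : ℝ) : ℂ) ^ 2 * (t : ℂ) ^ 2)) * (t : ℂ) ^ (2 * l + k) *
        oneF1 (((m : ℂ) + 4 * l + 2 * k + n) / 4) (2 * (l : ℂ) + k + n / 2)
          (2 * (I * s * ((‖y‖ : ℝ) : ℂ) ^ 2) * (t : ℂ) ^ 2)) := by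
  have hnorm : ((‖t • y‖ : ℝ) : ℂ) ^ 2 = (t : ℂ) ^ 2 * ((‖y‖ : ℝ) : ℂ) ^ 2 := by
    rw [norm_smul, Real.norm_eq_abs, ofReal_mul, mul_pow, ← ofReal_pow, sq_abs, ofReal_pow]
  rw [Fm, hhom, pow_mul, hnorm]
  push_cast
  ring_nf

lemma hasDerivAt_Fm_smul {k : ℕ} (hb : 0 < 2 * l + k + n)
    (hhom : ∀ (t : ℝ) (y : E n), h (t • y) = (t : ℂ) ^ k * h y) :
    HasDerivAt (fun t : ℝ => Fm n s m l k h θ (t • y))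
      (cexp (-I * m * θ / 2) * cexp (-I * s * ((‖y‖ : ℝ) : ℂ) ^ 2) * ((‖y‖ : ℝ) : ℂ) ^ (2 * l) *
        h y *
        ((2 * l + k - 2 * I * s * ((‖y‖ : ℝ) : ℂ) ^ 2 - 2 * (((m : ℂ) + 4 * l + 2 * k + n) / 4)) *
            oneF1 (((m : ℂ) + 4 * l + 2 * k + n) / 4) (2 * (l : ℂ) + k + n / 2)
              (2 * I * s * ((‖y‖ : ℝ) : ℂ) ^ 2) +
          2 * (((m : ℂ) + 4 * l + 2 * k + n) / 4) *
            oneF1 (((m : ℂ) + 4 * l + 2 * k + n) / 4 + 1) (2 * (l : ℂ) + k + n / 2)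
              (2 * I * s * ((‖y‖ : ℝ) : ℂ) ^ 2))) 1 := by
  rw [funext (Fm_smul hhom)]
  refine ((hasDerivAt_radial_oneF1 (lowerParam_re_pos hb) (I * s * ((‖y‖ : ℝ) : ℂ) ^ 2)
    (2 * l + k)).const_mul (cexp (-I * m * θ / 2) * ((‖y‖ : ℝ) : ℂ) ^ (2 * l) * h y)).congr_deriv ?_
  simp only [neg_mul, mul_assoc]
  push_cast
  ring

end Fm

/-- `η⁺.F_{m,l,k} = -((m+4l+2k+n)/4) F_{m+4,l,k}`, where
`(η⁺F)(θ,y) = ½ e^{-2iθ}(-∑ⱼ yⱼ ∂F/∂yⱼ - i ∂F/∂θ - (n/2 + 2is‖y‖²) F)`. -/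
theorem stmt12 (n k l : ℕ) (hn : 1 ≤ n) (m : ℤ) (s : ℂ)
    (h : E n → ℂ) (hh : IsHarmonicHomog k h) (θ : ℝ) (y : E n) :
    (1 / 2 : ℂ) * Complex.exp (-2 * Complex.I * (θ : ℂ)) *
        (-(∑ j : Fin n, ((y j : ℝ) : ℂ) * pd j (fun y' : E n => Fm n s m l k h θ y') y)
          - Complex.I * deriv (fun θ' : ℝ => Fm n s m l k h θ' y) θ
          - ((n : ℂ) / 2 + 2 * Complex.I * s * ((‖y‖ : ℝ) : ℂ) ^ 2) * Fm n s m l k h θ y)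
      = -(((m : ℂ) + 4 * (l : ℂ) + 2 * (k : ℂ) + (n : ℂ)) / 4) * Fm n s (m + 4) l k h θ y := by
  have hb : 0 < 2 * l + k + n := by omega
  rw [sum_coord_mul_pd_eq_deriv_smul (differentiable_Fm s m hb hh.differentiable θ y),
    (hasDerivAt_Fm_smul hb hh.2.1).deriv, (hasDerivAt_Fm_angle s m l h θ y k).deriv, Fm_add_four]
  simp only [Fm, Int.cast_natCast]
  ring_nf
  simp only [I_sq]
  ring

end
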